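/- arXiv:2103.01379 — 2 statements merged into one kernel-verified Lean document; each statement's English description precedes it below -/
import Mathlib

section
/- Let ε ≥ 0, δ ∈ [0,1), and let P, Q be probability measures on a measurable space with P ≪ Q. If P({x : |log((dP/dQ)(x))| ≤ ε}) ≥ 1 − δ, then for every measurable set S, P(S) ≤ e^ε · Q(S) + δ. -/
open MeasureTheory

/-! Where the privacy loss is at most `ε` we have `dP/dQ ≤ e^ε`, except on the `Q`-null set where
`dP/dQ = ∞` (whose `toReal`, hence log, is the junk value `0`). So on that set `P` is dominated by
`e^ε • Q`, while its complement has `P`-mass at most `δ`; splitting `S` along it gives the bound. -/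

lemma ENNReal.one_sub_ofReal_one_sub_le (δ : ℝ) :
    1 - ENNReal.ofReal (1 - δ) ≤ ENNReal.ofReal δ := by
  rw [tsub_le_iff_right]
  calc (1 : ENNReal) = ENNReal.ofReal (δ + (1 - δ)) := by simp
    _ ≤ ENNReal.ofReal δ + ENNReal.ofReal (1 - δ) := ENNReal.ofReal_add_le

lemma ENNReal.le_ofReal_exp_of_log_toReal_le {r : ENNReal} {ε : ℝ} (hr : r ≠ ⊤)
    (h : Real.log r.toReal ≤ ε) : r ≤ ENNReal.ofReal (Real.exp ε) :=
  (ENNReal.le_ofReal_iff_toReal_le hr (Real.exp_pos ε).le).2 (Real.le_exp_of_log_le h)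

namespace MeasureTheory

variable {X : Type*} [MeasurableSpace X]

lemma prob_compl_le_ofReal_of_ofReal_one_sub_le {P : Measure X} [IsProbabilityMeasure P]
    {A : Set X} (hA : MeasurableSet A) {δ : ℝ} (h : ENNReal.ofReal (1 - δ) ≤ P A) :
    P Aᶜ ≤ ENNReal.ofReal δ := by
  rw [prob_compl_eq_one_sub hA]
  exact (tsub_le_tsub_left h 1).trans (ENNReal.one_sub_ofReal_one_sub_le δ)

namespace Measure

variable {P Q : Measure X}

lemma le_mul_of_ae_restrict_rnDeriv_le [P.HaveLebesgueDecomposition Q] [SFinite Q]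
    (hPQ : P ≪ Q) {T : Set X} {c : ENNReal} (hc : ∀ᵐ x ∂Q.restrict T, P.rnDeriv Q x ≤ c) :
    P T ≤ c * Q T :=
  calc P T = ∫⁻ x in T, P.rnDeriv Q x ∂Q := (setLIntegral_rnDeriv hPQ T).symm
    _ ≤ ∫⁻ _ in T, c ∂Q := lintegral_mono_ae hc
    _ = c * Q T := setLIntegral_const T c

lemma measurableSet_abs_log_rnDeriv_le (P Q : Measure X) (ε : ℝ) :
    MeasurableSet {x | |Real.log (P.rnDeriv Q x).toReal| ≤ ε} :=
  measurableSet_le (by fun_prop) measurable_const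

lemma ae_restrict_rnDeriv_le_ofReal_exp [SigmaFinite P] (ε : ℝ) :
    ∀ᵐ x ∂Q.restrict {x | |Real.log (P.rnDeriv Q x).toReal| ≤ ε},
      P.rnDeriv Q x ≤ ENNReal.ofReal (Real.exp ε) := by
  filter_upwards [ae_restrict_of_ae (P.rnDeriv_lt_top Q),
    ae_restrict_mem (measurableSet_abs_log_rnDeriv_le P Q ε)] with x hfin hloss
  exact ENNReal.le_ofReal_exp_of_log_toReal_le hfin.ne (abs_le.mp hloss).2

end Measure

end MeasureTheory

theorem privacy_loss_bound_implies_approx_dp_general {X : Type*} [MeasurableSpace X]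
    (ε : ℝ) (δ : ℝ)
    (P Q : Measure X) [IsProbabilityMeasure P] [IsProbabilityMeasure Q]
    (hPQ : P ≪ Q)
    (h : ENNReal.ofReal (1 - δ) ≤ P {x | |Real.log (P.rnDeriv Q x).toReal| ≤ ε}) :
    ∀ S : Set X, MeasurableSet S →
      P S ≤ ENNReal.ofReal (Real.exp ε) * Q S + ENNReal.ofReal δ := by
  intro S _
  set A := {x | |Real.log (P.rnDeriv Q x).toReal| ≤ ε}
  have hA : MeasurableSet A := Measure.measurableSet_abs_log_rnDeriv_le P Q ε
  have hgood : P (S ∩ A) ≤ ENNReal.ofReal (Real.exp ε) * Q S :=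
    (Measure.le_mul_of_ae_restrict_rnDeriv_le hPQ <|
      ae_restrict_of_ae_restrict_of_subset Set.inter_subset_right
        (Measure.ae_restrict_rnDeriv_le_ofReal_exp ε)).trans
      (mul_le_mul_right (measure_mono Set.inter_subset_left) _)
  have hbad : P (S \ A) ≤ ENNReal.ofReal δ :=
    (measure_mono (Set.sdiff_subset_compl S A)).trans (prob_compl_le_ofReal_of_ofReal_one_sub_le hA h)
  calc P S ≤ P (S ∩ A) + P (S \ A) := measure_le_inter_add_sdiff P S A
    _ ≤ ENNReal.ofReal (Real.exp ε) * Q S + ENNReal.ofReal δ := add_le_add hgood hbad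

/-- A high-probability bound on the privacy loss implies `(ε, δ)`-DP: if with `P`-probability
at least `1 - δ` we have `|log((dP/dQ)(x))| ≤ ε`, then for every measurable set `S`,
`P(S) ≤ e^ε · Q(S) + δ`. -/
theorem privacy_loss_bound_implies_approx_dp {X : Type*} [MeasurableSpace X]
    (ε : ℝ) (hε : 0 ≤ ε) (δ : ℝ) (hδ : δ ∈ Set.Ico (0 : ℝ) 1)
    (P Q : Measure X) [IsProbabilityMeasure P] [IsProbabilityMeasure Q]
    (hPQ : P ≪ Q)
    (h : ENNReal.ofReal (1 - δ) ≤ P {x | |Real.log (P.rnDeriv Q x).toReal| ≤ ε}) :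
    ∀ S : Set X, MeasurableSet S →
      P S ≤ ENNReal.ofReal (Real.exp ε) * Q S + ENNReal.ofReal δ :=
  privacy_loss_bound_implies_approx_dp_general ε δ P Q hPQ h
end

section
/- (Truncation compatibility identity, from the proof of Theorem 4.2.) In the setting of the truncated odometer with truncation level ε_f: for b ∈ {0,1}, let Vᵇ be the joint measure composed from the original kernels κ₁ᵇ, …, κₙᵇ, and let Ṽᵇ be the joint measure composed from the truncated kernels κ̃₁ᵇ, …, κ̃ₙᵇ. Then for every measurable set A of trajectories contained in {v ∈ Y₁ × ⋯ × Yₙ : ∑_{i=1}^{n} εᵢ(v_{≤ i−1}) ≤ ε_f} (a set of trajectories with no ⊥ coordinate), Vᵇ(A) = Ṽᵇ(A). -/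
/-!
Induction on the length `n`, in the stronger form that the original joint measure restricted to the
budget-respecting trajectories, pushed forward along the coordinatewise embedding `Y ↪ Y ∪ {⊥}`,
equals the truncated joint measure restricted to their image. A budget-respecting trajectory of
length `n + 1` extends a prefix on which the running budget through step `n` is within `εf`: there
the `n`-th truncated kernel is `κₙ`, and, budgets being nonnegative, the prefix is itself
budget-respecting, so the induction hypothesis applies. At every other prefix the truncated kernel
emits `⊥`, which leaves the image of the budget-respecting trajectories.
-/

open MeasureTheory ProbabilityTheory

universe u

/-- The natural σ-algebra on `Y ∪ {⊥}`, modeled as `Option Y`. -/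
instance optionMeasurableSpace {X : Type u} [MeasurableSpace X] :
    MeasurableSpace (Option X) :=
  MeasurableSpace.comap (Equiv.optionEquivSumPUnit.{u, u} X) inferInstance

/-- The joint measure on trajectories obtained by iterated composition of a sequence of
kernels, where the `i`-th kernel takes as input the first `i` outcomes. -/
noncomputable def jointMeasure {Y : ℕ → Type*} [∀ i, MeasurableSpace (Y i)]
    (κ : ∀ i, Kernel (∀ j : Fin i, Y j) (Y i)) :
    (n : ℕ) → Measure (∀ j : Fin n, Y j)
  | 0 => Measure.dirac (fun j => j.elim0)
  | (n + 1) => (jointMeasure κ n).bind (fun v => ((κ n) v).map (Fin.snoc v))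

/-- The joint measure of the original (non-truncated) interaction: kernels take `⊥`-extended
prefixes as input but the original interaction only produces non-`⊥` outcomes, which are fed
back embedded via `some`. -/
noncomputable def jointOrig {Y : ℕ → Type u} [∀ i, MeasurableSpace (Y i)]
    (κ : ∀ i, Kernel (∀ j : Fin i, Option (Y j)) (Y i)) :
    (n : ℕ) → Measure (∀ j : Fin n, Y j)
  | 0 => Measure.dirac (fun j => j.elim0)
  | (n + 1) => (jointOrig κ n).bind
      (fun v => ((κ n) (fun j => some (v j))).map (Fin.snoc v))

/-- Running budget used after step `i` on the prefix `v` (including step `i`'s budget):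
`∑_{j=0}^{i} ε_j(v_{≤ j-1})`. -/
noncomputable def cumBudget {Y : ℕ → Type u}
    (ε : ∀ i : ℕ, (∀ j : Fin i, Option (Y j)) → ℝ)
    (i : ℕ) (v : ∀ j : Fin i, Option (Y j)) : ℝ :=
  ∑ j : Fin (i + 1),
    ε j (fun k : Fin j => v ⟨k.1, lt_of_lt_of_le k.2 (Nat.lt_succ_iff.mp j.2)⟩)

def MeasurableEquiv.optionEquivSumPUnit (X : Type u) [MeasurableSpace X] :
    Option X ≃ᵐ X ⊕ PUnit.{u + 1} where
  toEquiv := Equiv.optionEquivSumPUnit X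
  measurable_toFun := comap_measurable _
  measurable_invFun := by
    rintro s ⟨t, ht, rfl⟩
    simpa [Set.preimage_preimage] using ht

theorem measurableEmbedding_some {X : Type u} [MeasurableSpace X] :
    MeasurableEmbedding (some : X → Option X) :=
  (MeasurableEquiv.optionEquivSumPUnit X).symm.measurableEmbedding.comp
    ⟨Sum.inl_injective, measurable_inl, fun {_} hs => hs.inl_image⟩

theorem MeasurableEmbedding.piMap {ι : Type*} [Countable ι] {Z W : ι → Type*}
    [∀ j, MeasurableSpace (Z j)] [∀ j, MeasurableSpace (W j)]
    {f : ∀ j, Z j → W j} (hf : ∀ j, MeasurableEmbedding (f j)) :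
    MeasurableEmbedding (Pi.map f) := by
  have hmeas : Measurable (Pi.map f) :=
    measurable_pi_lambda _ fun j => (hf j).measurable.comp (measurable_pi_apply j)
  rcases isEmpty_or_nonempty (∀ j, Z j) with hZ | ⟨⟨z⟩⟩
  · exact ⟨fun v => isEmptyElim v, hmeas, fun _ => by simp [Set.eq_empty_of_isEmpty]⟩
  -- a measurable embedding with nonempty domain has a measurable left inverse
  choose g hg hgf using fun j => (hf j).exists_measurable_extend measurable_id fun _ => ⟨z j⟩
  refine .of_measurable_inverse hmeas ?_ (measurable_pi_lambda _ fun j =>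
    (hg j).comp (measurable_pi_apply j)) fun v => funext fun j => congrFun (hgf j) (v j)
  rw [Set.range_piMap]
  exact .univ_pi fun j => (hf j).measurableSet_range

theorem MeasurableEmbedding.map_restrict_of_subset {α β : Type*} [MeasurableSpace α]
    [MeasurableSpace β] {f : α → β} (hf : MeasurableEmbedding f) {μ : Measure α}
    {ν : Measure β} {s t : Set α} (h : (μ.restrict s).map f = ν.restrict (f '' s))
    (hts : t ⊆ s) : (μ.restrict t).map f = ν.restrict (f '' t) := by
  rw [← Measure.restrict_restrict_of_subset (Set.image_mono hts), ← h, hf.restrict_map,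
    Set.preimage_image_eq _ hf.injective, Measure.restrict_restrict_of_subset hts]

theorem measurable_snoc {Z : ℕ → Type*} [∀ i, MeasurableSpace (Z i)] {n : ℕ} :
    Measurable fun p : (∀ j : Fin n, Z j) × Z n =>
      (Fin.snoc p.1 p.2 : ∀ j : Fin (n + 1), Z j) := by
  refine measurable_pi_lambda _ fun j => ?_
  cases j using Fin.lastCases with
  | last => simpa using measurable_snd
  | cast i => simpa using measurable_fst.eval (a := i)

theorem measurable_snoc_right {Z : ℕ → Type*} [∀ i, MeasurableSpace (Z i)] {n : ℕ}
    (v : ∀ j : Fin n, Z j) : Measurable (Fin.snoc (α := fun j => Z j) v) :=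
  measurable_snoc.comp measurable_prodMk_left

theorem measurable_map_snoc {Z : ℕ → Type*} [∀ i, MeasurableSpace (Z i)] {n : ℕ}
    (k : Kernel (∀ j : Fin n, Z j) (Z n)) [IsSFiniteKernel k] :
    Measurable fun v => ((k v).map (Fin.snoc v) : Measure (∀ j : Fin (n + 1), Z j)) := by
  have h : (fun v => ((k v).map (Fin.snoc v) : Measure (∀ j : Fin (n + 1), Z j)))
      = fun v => (Kernel.id ×ₖ k).map (fun p => Fin.snoc p.1 p.2) v := by
    ext1 v
    rw [Kernel.map_apply _ measurable_snoc, Kernel.prod_apply, Kernel.id_apply,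
      Measure.dirac_prod, Measure.map_map measurable_snoc measurable_prodMk_left]
    rfl
  rw [h]
  exact Kernel.measurable _

theorem jointMeasure_succ_apply {Z : ℕ → Type*} [∀ i, MeasurableSpace (Z i)]
    (κ : ∀ i, Kernel (∀ j : Fin i, Z j) (Z i)) [∀ i, IsSFiniteKernel (κ i)]
    (n : ℕ) {s : Set (∀ j : Fin (n + 1), Z j)} (hs : MeasurableSet s) :
    jointMeasure κ (n + 1) s =
      ∫⁻ v, κ n v (Fin.snoc (α := fun j => Z j) v ⁻¹' s) ∂jointMeasure κ n := by
  rw [jointMeasure, Measure.bind_apply hs (measurable_map_snoc (κ n)).aemeasurable]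
  exact lintegral_congr fun v => Measure.map_apply (measurable_snoc_right v) hs

section Trajectories

variable {Y : ℕ → Type u}

def someTraj (n : ℕ) : (∀ j : Fin n, Y j) → ∀ j : Fin n, Option (Y j) :=
  Pi.map fun _ => some

theorem measurableEmbedding_someTraj [∀ i, MeasurableSpace (Y i)] (n : ℕ) :
    MeasurableEmbedding (someTraj (Y := Y) n) :=
  .piMap fun _ => measurableEmbedding_some

theorem someTraj_snoc {n : ℕ} (u : ∀ j : Fin n, Y j) (y : Y n) :
    someTraj (n + 1) (Fin.snoc u y) = Fin.snoc (someTraj n u) (some y) := by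
  ext1 j
  cases j using Fin.lastCases <;> simp [someTraj]

theorem range_someTraj (n : ℕ) :
    Set.range (someTraj (Y := Y) n) = {w | ∀ j, w j ≠ none} := by
  ext w
  simp [someTraj, Set.range_piMap, Option.ne_none_iff_exists]

theorem jointOrig_eq_jointMeasure_comap [∀ i, MeasurableSpace (Y i)]
    (κ : ∀ i, Kernel (∀ j : Fin i, Option (Y j)) (Y i)) (n : ℕ) :
    jointOrig κ n = jointMeasure
      (fun i => (κ i).comap (someTraj i) (measurableEmbedding_someTraj i).measurable) n := by
  induction n with
  | zero => rfl
  | succ n ih => rw [jointOrig, jointMeasure, ih]; rfl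

end Trajectories

section Budget

variable {Y : ℕ → Type u} (ε : ∀ i : ℕ, (∀ j : Fin i, Option (Y j)) → ℝ) (εf : ℝ)

def withinBudget (n : ℕ) : Set (∀ j : Fin n, Y j) :=
  {v | ∑ i : Fin n, ε i (fun k : Fin i => some (v ⟨k.1, lt_trans k.2 i.2⟩)) ≤ εf}

/-- Prefixes of length `n` after which the `n`-th truncated kernel is not yet truncated. -/
def stepWithinBudget (n : ℕ) : Set (∀ j : Fin n, Y j) :=
  someTraj n ⁻¹' {w | cumBudget ε n w ≤ εf}

theorem withinBudget_succ (n : ℕ) :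
    withinBudget ε εf (n + 1) = Fin.init ⁻¹' stepWithinBudget (Y := Y) ε εf n :=
  rfl

theorem stepWithinBudget_subset_withinBudget (hε : ∀ i v, 0 ≤ ε i v) (n : ℕ) :
    stepWithinBudget ε εf n ⊆ withinBudget (Y := Y) ε εf n := by
  intro u hu
  have hcum : cumBudget ε n (someTraj n u) =
      (∑ i : Fin n, ε i (fun k : Fin i => some (u ⟨k.1, lt_trans k.2 i.2⟩))) +
        ε n (someTraj n u) := by
    rw [cumBudget, Fin.sum_univ_castSucc]
    rfl
  calc _ ≤ _ + ε n (someTraj n u) := le_add_of_nonneg_right (hε n _)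
    _ = cumBudget ε n (someTraj n u) := hcum.symm
    _ ≤ εf := hu

theorem snoc_preimage_withinBudget_succ {n : ℕ} {u : ∀ j : Fin n, Y j}
    (hu : u ∈ stepWithinBudget ε εf n) :
    Fin.snoc u ⁻¹' withinBudget ε εf (n + 1) = Set.univ :=
  Set.eq_univ_of_forall fun _ => by simpa [withinBudget_succ] using hu

theorem mem_image_stepWithinBudget_iff {n : ℕ} (w : ∀ j : Fin n, Option (Y j)) :
    w ∈ someTraj n '' stepWithinBudget ε εf n ↔ cumBudget ε n w ≤ εf ∧ ∀ j, w j ≠ none := by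
  rw [stepWithinBudget, Set.image_preimage_eq_range_inter, range_someTraj]
  exact and_comm

variable [∀ i, MeasurableSpace (Y i)]

theorem measurableSet_withinBudget (hε : ∀ i, Measurable (ε i)) (n : ℕ) :
    MeasurableSet (withinBudget (Y := Y) ε εf n) := by
  refine measurableSet_le (Finset.measurable_sum _ fun i _ => (hε i).comp ?_) measurable_const
  exact measurable_pi_lambda _ fun k =>
    measurableEmbedding_some.measurable.comp (measurable_pi_apply _)

theorem measurableSet_stepWithinBudget (hε : ∀ i, Measurable (ε i)) (n : ℕ) :
    MeasurableSet (stepWithinBudget (Y := Y) ε εf n) := by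
  refine (measurableEmbedding_someTraj n).measurable (measurableSet_le ?_ measurable_const)
  exact Finset.measurable_sum _ fun j _ =>
    (hε j).comp (measurable_pi_lambda _ fun k => measurable_pi_apply _)

end Budget

section Truncation

variable {Y : ℕ → Type u} [∀ i, MeasurableSpace (Y i)]
  (κ : ∀ i, Kernel (∀ j : Fin i, Option (Y j)) (Y i))
  (ε : ∀ i : ℕ, (∀ j : Fin i, Option (Y j)) → ℝ) (εf : ℝ)
  (tκ : ∀ i, Kernel (∀ j : Fin i, Option (Y j)) (Option (Y i)))

def IsTruncation : Prop :=
  ∀ i (v : ∀ j : Fin i, Option (Y j)),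
    ((cumBudget ε i v ≤ εf ∧ ∀ j, v j ≠ none) → (tκ i) v = ((κ i) v).map Option.some) ∧
    (¬(cumBudget ε i v ≤ εf ∧ ∀ j, v j ≠ none) → (tκ i) v = Measure.dirac none)

variable {κ ε εf tκ}

theorem IsTruncation.isMarkovKernel [∀ i, IsMarkovKernel (κ i)] (h : IsTruncation κ ε εf tκ)
    (i : ℕ) : IsMarkovKernel (tκ i) := by
  refine ⟨fun v => ?_⟩
  by_cases hv : cumBudget ε i v ≤ εf ∧ ∀ j, v j ≠ none
  · rw [(h i v).1 hv]
    exact Measure.isProbabilityMeasure_map measurableEmbedding_some.measurable.aemeasurable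
  · rw [(h i v).2 hv]
    infer_instance

theorem IsTruncation.apply_someTraj (h : IsTruncation κ ε εf tκ) {n : ℕ}
    {u : ∀ j : Fin n, Y j} (hu : u ∈ stepWithinBudget ε εf n) :
    tκ n (someTraj n u) = (κ n (someTraj n u)).map some :=
  (h n _).1 ((mem_image_stepWithinBudget_iff ε εf _).1 (Set.mem_image_of_mem _ hu))

theorem IsTruncation.apply_of_notMem (h : IsTruncation κ ε εf tκ) {n : ℕ}
    {w : ∀ j : Fin n, Option (Y j)} (hw : w ∉ someTraj n '' stepWithinBudget ε εf n) :
    tκ n w = Measure.dirac none :=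
  (h n w).2 (mt (mem_image_stepWithinBudget_iff ε εf w).2 hw)

theorem IsTruncation.apply_someTraj_snoc_preimage (h : IsTruncation κ ε εf tκ) {n : ℕ}
    {u : ∀ j : Fin n, Y j} (hu : u ∈ stepWithinBudget ε εf n)
    (C : Set (∀ j : Fin (n + 1), Option (Y j))) :
    tκ n (someTraj n u) (Fin.snoc (α := fun j => Option (Y j)) (someTraj n u) ⁻¹' C) =
      κ n (someTraj n u) (Fin.snoc (α := fun j => Y j) u ⁻¹' (someTraj (n + 1) ⁻¹' C)) := by
  rw [h.apply_someTraj hu, measurableEmbedding_some.map_apply]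
  congr 1
  ext y
  simp [someTraj_snoc]

theorem IsTruncation.apply_snoc_preimage_inter (h : IsTruncation κ ε εf tκ)
    (hε : ∀ i, Measurable (ε i)) {n : ℕ} (w : ∀ j : Fin n, Option (Y j))
    {C : Set (∀ j : Fin (n + 1), Option (Y j))} (hC : MeasurableSet C) :
    tκ n w (Fin.snoc (α := fun j => Option (Y j)) w ⁻¹'
        (C ∩ someTraj (n + 1) '' withinBudget ε εf (n + 1))) =
      (someTraj n '' stepWithinBudget ε εf n).indicator
        (fun w => tκ n w (Fin.snoc (α := fun j => Option (Y j)) w ⁻¹' C)) w := by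
  by_cases hw : w ∈ someTraj n '' stepWithinBudget ε εf n
  · rw [Set.indicator_of_mem hw]
    obtain ⟨u, hu, rfl⟩ := hw
    rw [h.apply_someTraj_snoc_preimage hu, h.apply_someTraj_snoc_preimage hu, Set.preimage_inter,
      Set.preimage_image_eq _ (measurableEmbedding_someTraj _).injective, Set.preimage_inter,
      snoc_preimage_withinBudget_succ ε εf hu, Set.inter_univ]
  · have hM := (measurableEmbedding_someTraj (n + 1)).measurableSet_image.2
      (measurableSet_withinBudget ε εf hε (n + 1))
    rw [Set.indicator_of_notMem hw, h.apply_of_notMem hw,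
      Measure.dirac_apply' _
        (measurable_snoc_right (Z := fun j => Option (Y j)) w (hC.inter hM))]
    refine Set.indicator_of_notMem (fun hmem => ?_) _
    obtain ⟨v, -, hv⟩ := hmem.2
    simpa [someTraj] using congrFun hv (Fin.last n)

end Truncation

section Compatibility

variable {Y : ℕ → Type u} [∀ i, MeasurableSpace (Y i)]
  {κ : ∀ i, Kernel (∀ j : Fin i, Option (Y j)) (Y i)} [∀ i, IsMarkovKernel (κ i)]
  {ε : ∀ i : ℕ, (∀ j : Fin i, Option (Y j)) → ℝ} {εf : ℝ}
  {tκ : ∀ i, Kernel (∀ j : Fin i, Option (Y j)) (Option (Y i))}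

theorem map_restrict_jointOrig_succ_apply (hε : ∀ i, Measurable (ε i)) (n : ℕ)
    {C : Set (∀ j : Fin (n + 1), Option (Y j))} (hC : MeasurableSet C) :
    ((jointOrig κ (n + 1)).restrict (withinBudget ε εf (n + 1))).map (someTraj (n + 1)) C =
      ∫⁻ u in stepWithinBudget ε εf n,
        κ n (someTraj n u) (Fin.snoc (α := fun j => Y j) u ⁻¹' (someTraj (n + 1) ⁻¹' C))
        ∂jointOrig κ n := by
  have hC' := (measurableEmbedding_someTraj (n + 1)).measurable hC
  rw [Measure.map_apply (measurableEmbedding_someTraj _).measurable hC,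
    Measure.restrict_apply hC', jointOrig_eq_jointMeasure_comap,
    jointMeasure_succ_apply _ n (hC'.inter (measurableSet_withinBudget ε εf hε (n + 1))),
    ← jointOrig_eq_jointMeasure_comap,
    ← lintegral_indicator (measurableSet_stepWithinBudget ε εf hε n)]
  refine lintegral_congr fun u => ?_
  by_cases hu : u ∈ stepWithinBudget ε εf n
  · rw [Set.indicator_of_mem hu, Set.preimage_inter, snoc_preimage_withinBudget_succ ε εf hu,
      Set.inter_univ]
    rfl
  · have h_empty : Fin.snoc u ⁻¹' withinBudget ε εf (n + 1) = ∅ :=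
      Set.eq_empty_of_forall_notMem fun _ => by simpa [withinBudget_succ] using hu
    rw [Set.indicator_of_notMem hu, Set.preimage_inter, h_empty, Set.inter_empty, measure_empty]

theorem IsTruncation.restrict_jointMeasure_succ_apply (h : IsTruncation κ ε εf tκ)
    (hε : ∀ i, Measurable (ε i)) (n : ℕ)
    {C : Set (∀ j : Fin (n + 1), Option (Y j))} (hC : MeasurableSet C) :
    (jointMeasure (Y := fun i => Option (Y i)) tκ (n + 1)).restrict
        (someTraj (n + 1) '' withinBudget ε εf (n + 1)) C =
      ∫⁻ w in someTraj n '' stepWithinBudget ε εf n,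
        tκ n w (Fin.snoc (α := fun j => Option (Y j)) w ⁻¹' C)
        ∂jointMeasure (Y := fun i => Option (Y i)) tκ n := by
  have := h.isMarkovKernel
  have hM := (measurableEmbedding_someTraj (n + 1)).measurableSet_image.2
    (measurableSet_withinBudget ε εf hε (n + 1))
  rw [Measure.restrict_apply hC, jointMeasure_succ_apply _ n (hC.inter hM),
    ← lintegral_indicator ((measurableEmbedding_someTraj n).measurableSet_image.2
      (measurableSet_stepWithinBudget ε εf hε n))]
  exact lintegral_congr fun w => h.apply_snoc_preimage_inter hε w hC

theorem IsTruncation.map_restrict_jointOrig (h : IsTruncation κ ε εf tκ)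
    (hε_nonneg : ∀ i v, 0 ≤ ε i v) (hε : ∀ i, Measurable (ε i)) (n : ℕ) :
    ((jointOrig κ n).restrict (withinBudget ε εf n)).map (someTraj n) =
      (jointMeasure (Y := fun i => Option (Y i)) tκ n).restrict
        (someTraj n '' withinBudget ε εf n) := by
  induction n with
  | zero =>
    have h_map : (jointOrig κ 0).map (someTraj 0) =
        jointMeasure (Y := fun i => Option (Y i)) tκ 0 := by
      rw [jointOrig, jointMeasure, Measure.map_dirac' (measurableEmbedding_someTraj 0).measurable]
      exact congrArg _ (Subsingleton.elim _ _)
    rw [← h_map, (measurableEmbedding_someTraj 0).restrict_map,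
      Set.preimage_image_eq _ (measurableEmbedding_someTraj 0).injective]
  | succ n ih =>
    have hD := measurableSet_stepWithinBudget ε εf hε n
    have ihD := (measurableEmbedding_someTraj n).map_restrict_of_subset ih
      (stepWithinBudget_subset_withinBudget ε εf hε_nonneg n)
    ext C hC
    rw [map_restrict_jointOrig_succ_apply hε n hC, h.restrict_jointMeasure_succ_apply hε n hC,
      ← ihD, (measurableEmbedding_someTraj n).lintegral_map]
    exact setLIntegral_congr_fun hD fun u hu => (h.apply_someTraj_snoc_preimage hu C).symm

end Compatibility

/-- Truncation compatibility identity (from the proof of Theorem 4.2): on any measurable set of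
trajectories whose total budget stays within the truncation level `ε_f` (hence with no `⊥`
coordinate), the original joint measure and the truncated joint measure agree. -/
theorem trunc_compatibility {Y : ℕ → Type u} [∀ i, MeasurableSpace (Y i)]
    (n : ℕ)
    (κ : ∀ i, Kernel (∀ j : Fin i, Option (Y j)) (Y i))
    [∀ i, IsMarkovKernel (κ i)]
    (ε : ∀ i : ℕ, (∀ j : Fin i, Option (Y j)) → ℝ)
    (hε_nonneg : ∀ i v, 0 ≤ ε i v)
    (hε_meas : ∀ i, Measurable (ε i))
    (εf : ℝ)
    (tκ : ∀ i, Kernel (∀ j : Fin i, Option (Y j)) (Option (Y i)))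
    (htκ : ∀ i (v : ∀ j : Fin i, Option (Y j)),
      ((cumBudget ε i v ≤ εf ∧ ∀ j, v j ≠ none) →
        (tκ i) v = ((κ i) v).map Option.some) ∧
      (¬(cumBudget ε i v ≤ εf ∧ ∀ j, v j ≠ none) →
        (tκ i) v = Measure.dirac (none : Option (Y i)))) :
    ∀ A : Set (∀ j : Fin n, Y j), MeasurableSet A →
      (∀ v ∈ A, ∑ i : Fin n,
        ε i (fun k : Fin i => some (v ⟨k.1, lt_trans k.2 i.2⟩)) ≤ εf) →
      jointOrig κ n A =
        jointMeasure (Y := fun i => Option (Y i)) tκ n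
          ((fun (v : ∀ j : Fin n, Y j) (j : Fin n) => some (v j)) '' A) := by
  intro A _ hA
  have h_restrict := (measurableEmbedding_someTraj n).map_restrict_of_subset
    (IsTruncation.map_restrict_jointOrig htκ hε_nonneg hε_meas n) hA
  have h_univ := congrArg (· Set.univ) h_restrict
  simp only [(measurableEmbedding_someTraj n).map_apply, Set.preimage_univ,
    Measure.restrict_apply_univ] at h_univ
  exact h_univ
end
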